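/- Let τ ∈ ℂ with Im τ > 0 and let κ ∈ ℂ be such that 2κ ∉ ℤ + τℤ. Then the function z ↦ ϑ₁(z+κ,τ) + ϑ₁(z−κ,τ) is not a scalar multiple of z ↦ ϑ₁(z,τ); that is, there is no constant c ∈ ℂ with ϑ₁(z+κ,τ) + ϑ₁(z−κ,τ) = c·ϑ₁(z,τ) for all z ∈ ℂ. -/

import Mathlib

open Complex

/-- Jacobi's first theta function
`ϑ₁(z,τ) = −∑_{m∈ℤ} exp(πi(m+1/2)²τ + 2πi(m+1/2)(z+1/2))` (here `theta1 τ z = ϑ₁(z,τ)`). -/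
noncomputable def theta1 (τ z : ℂ) : ℂ :=
  -∑' m : ℤ, Complex.exp ((Real.pi : ℂ) * Complex.I * ((m : ℂ) + 1 / 2) ^ 2 * τ +
    2 * (Real.pi : ℂ) * Complex.I * ((m : ℂ) + 1 / 2) * (z + 1 / 2))

/-!
Both sides expand in the characters `e_m(z) = exp(2πi(m+1/2)z)`, and `z ↦ z ± κ` multiplies
`e_m` by `exp(±2πi(m+1/2)κ)`, so the `m`-th coefficient of `ϑ₁(z+κ) + ϑ₁(z−κ)` is
`2 cos(2π(m+1/2)κ)` times the (nonzero) `m`-th coefficient of `ϑ₁`. By uniqueness of Fourier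
coefficients, `c = 2 cos(2π(m+1/2)κ)` for every `m`; comparing `m = 0` and `m = 1` gives
`cos(πκ) = cos(3πκ)`, which forces `2κ ∈ ℤ`.
-/

theorem eq_zero_of_forall_tsum_mul_fourier_eq_zero {T : ℝ} [Fact (0 < T)] {c : ℤ → ℂ}
    (hc : Summable c) (h : ∀ x : AddCircle T, ∑' n, c n * fourier n x = 0) : c = 0 := by
  have hsum : HasSum (fun n => c n • fourier (T := T) n) 0 := by
    have hs : Summable fun n => c n • fourier (T := T) n :=
      .of_norm (by simpa [norm_smul, fourier_norm] using hc.norm)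
    convert hs.hasSum
    ext x
    rw [ContinuousMap.zero_apply, ← ContinuousMap.evalCLM_apply ℂ x,
      ContinuousLinearMap.map_tsum _ hs]
    simpa using (h x).symm
  -- The series also converges in `L²`, where pairing with `fourierLp 2 k` extracts `c k`.
  ext k
  have hk := (innerSL ℂ (fourierLp (T := T) 2 k)).hasSum
    ((ContinuousMap.toLp 2 AddCircle.haarAddCircle ℂ).hasSum hsum)
  simp only [map_smul, map_zero, innerSL_apply_apply,
    orthonormal_iff_ite.mp orthonormal_fourier, smul_eq_mul, mul_ite, mul_one, mul_zero] at hk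
  simpa using (hasSum_single k fun n hn => if_neg (Ne.symm hn)).unique hk

noncomputable def halfIntChar (m : ℤ) (z : ℂ) : ℂ :=
  cexp (2 * Real.pi * I * (m + 1 / 2) * z)

lemma halfIntChar_add (m : ℤ) (z w : ℂ) :
    halfIntChar m (z + w) = halfIntChar m z * halfIntChar m w := by
  rw [halfIntChar, halfIntChar, halfIntChar, ← exp_add]; ring_nf

lemma halfIntChar_add_add_halfIntChar_sub (m : ℤ) (z w : ℂ) :
    halfIntChar m (z + w) + halfIntChar m (z - w) =
      2 * cos (2 * Real.pi * (m + 1 / 2) * w) * halfIntChar m z := by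
  rw [sub_eq_add_neg, halfIntChar_add, halfIntChar_add, cos, halfIntChar, halfIntChar,
    halfIntChar]
  ring_nf

theorem eq_zero_of_forall_tsum_mul_halfIntChar_eq_zero {c : ℤ → ℂ} (hc : Summable c)
    (h : ∀ x : ℝ, ∑' m, c m * halfIntChar m x = 0) : c = 0 := by
  have : Fact ((0 : ℝ) < 1) := ⟨one_pos⟩
  refine eq_zero_of_forall_tsum_mul_fourier_eq_zero (T := 1) hc fun x => ?_
  induction x using QuotientAddGroup.induction_on with | H x => ?_
  have hx := congr_arg (· * cexp (-(Real.pi * I * x))) (h x)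
  simp only [zero_mul, ← tsum_mul_right] at hx
  rw [← hx]
  congr 1 with m
  rw [fourier_coe_apply, halfIntChar, mul_assoc (c m), ← exp_add]
  congr 2
  push_cast
  ring

lemma summable_theta1_terms {τ : ℂ} (hτ : 0 < τ.im) (z : ℂ) :
    Summable fun m : ℤ => cexp (Real.pi * I * (m + 1 / 2) ^ 2 * τ) * halfIntChar m z := by
  refine (((summable_jacobiTheta₂_term_iff (z + τ / 2) τ).mpr hτ).mul_left
    (cexp (Real.pi * I * τ / 4 + Real.pi * I * z))).congr fun m => ?_
  rw [jacobiTheta₂_term, halfIntChar, ← exp_add, ← exp_add]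
  ring_nf

lemma theta1_eq_neg_tsum (τ z : ℂ) :
    theta1 τ z =
      -∑' m : ℤ, cexp (Real.pi * I * (m + 1 / 2) ^ 2 * τ) * halfIntChar m (z + 1 / 2) := by
  simp only [theta1, halfIntChar, ← exp_add, mul_assoc]

lemma hasSum_theta1_add_add_theta1_sub_sub_mul {τ : ℂ} (hτ : 0 < τ.im) (κ c z : ℂ) :
    HasSum (fun m : ℤ => cexp (Real.pi * I * (m + 1 / 2) ^ 2 * τ) *
        (c - 2 * cos (2 * Real.pi * (m + 1 / 2) * κ)) * halfIntChar m (z + 1 / 2))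
      (theta1 τ (z + κ) + theta1 τ (z - κ) - c * theta1 τ z) := by
  have h (w : ℂ) : HasSum (fun m : ℤ => cexp (Real.pi * I * (m + 1 / 2) ^ 2 * τ) *
      halfIntChar m (w + 1 / 2)) (-theta1 τ w) := by
    rw [theta1_eq_neg_tsum, neg_neg]
    exact (summable_theta1_terms hτ _).hasSum
  have hcomb := ((h z).mul_left c).sub ((h (z + κ)).add (h (z - κ)))
  rw [mul_neg, ← neg_add, neg_sub_neg] at hcomb
  refine hcomb.congr_fun fun m => ?_
  rw [add_right_comm, sub_add_eq_add_sub]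
  linear_combination cexp (Real.pi * I * (m + 1 / 2) ^ 2 * τ) *
    halfIntChar_add_add_halfIntChar_sub m (z + 1 / 2) κ

lemma exists_int_eq_two_mul_of_cos_eq_cos_three_mul {κ : ℂ}
    (h : cos (Real.pi * κ) = cos (3 * Real.pi * κ)) : ∃ n : ℤ, 2 * κ = n := by
  have hπ : (Real.pi : ℂ) ≠ 0 := ofReal_ne_zero.mpr Real.pi_ne_zero
  obtain ⟨k, hk | hk⟩ := cos_eq_cos_iff.mp h
  · exact ⟨2 * k, mul_left_cancel₀ hπ (by push_cast; linear_combination hk)⟩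
  · exact ⟨k, mul_left_cancel₀ hπ (by linear_combination hk / 2)⟩

/-- If `2κ ∉ ℤ + τℤ`, then `z ↦ ϑ₁(z+κ) + ϑ₁(z−κ)` is not a scalar multiple of
`z ↦ ϑ₁(z)`. -/
theorem theta1_shift_sum_not_multiple (τ : ℂ) (hτ : 0 < τ.im) (κ : ℂ)
    (hκ : ¬∃ m l : ℤ, 2 * κ = (m : ℂ) + τ * (l : ℂ)) :
    ¬∃ c : ℂ, ∀ z : ℂ, theta1 τ (z + κ) + theta1 τ (z - κ) = c * theta1 τ z := by
  rintro ⟨c, hc⟩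
  have hsum := hasSum_theta1_add_add_theta1_sub_sub_mul hτ κ c
  have hcoeff := eq_zero_of_forall_tsum_mul_halfIntChar_eq_zero
    (by simpa [halfIntChar] using (hsum (-(1 / 2))).summable)
    fun x => by simpa [hc] using (hsum (x - 1 / 2)).tsum_eq
  have hcos (m : ℤ) : c = 2 * cos (2 * Real.pi * (m + 1 / 2) * κ) := by
    simpa [sub_eq_zero, exp_ne_zero] using congr_fun hcoeff m
  obtain ⟨n, hn⟩ := exists_int_eq_two_mul_of_cos_eq_cos_three_mul (κ := κ) <| by
    have h01 := mul_left_cancel₀ two_ne_zero ((hcos 0).symm.trans (hcos 1))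
    push_cast at h01
    convert h01 using 2 <;> ring
  exact hκ ⟨n, 0, by simp [hn]⟩
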